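/- arXiv:2601.09277 — 4 statements merged into one kernel-verified Lean document; each statement's English description precedes it below -/
import Mathlib

section
/- Let g : ℤ → ℂ satisfy (m+n)·g(m) = (m−n)·g(m+n) + (m+n)·g(n) for all m,n ∈ ℤ, together with g(0) = 0 and g(−1) = 0. Then g(m) = (1/2)·(m² + m)·g(1) for all m ∈ ℤ. -/
/-!
Putting `n = 1` in the functional equation shows that `f m = g m - (m² + m) / 2 * g 1` satisfies
`(m + 1) f m = (m - 1) f (m + 1)`. Since the coefficient `m - 1` vanishes only at `m = 1` and
`m + 1` only at `m = -1`, such an `f` is determined on `m ≥ 2` by `f 2` and on `m ≤ -1` by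
`f (-1)`, while `f 0` and `f 1` are forced to vanish. Here `f (-1) = g (-1) = 0`, and
`f 2 = g 2 - 3 g 1 = 0` follows from the equation at `(2, 1)` and `(-1, 3)`.
-/

theorem eq_zero_of_mul_eq_mul_succ {K : Type*} [Field K] [CharZero K] (f : ℤ → K)
    (hf : ∀ m : ℤ, ((m : K) + 1) * f m = ((m : K) - 1) * f (m + 1))
    (h2 : f 2 = 0) (hm1 : f (-1) = 0) (m : ℤ) : f m = 0 := by
  have h0 : f 0 = 0 := by
    have := hf (-1)
    norm_num [hm1] at this
    exact this
  have h1 : f 1 = 0 := by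
    have := hf 0
    push_cast at this
    simpa [h0] using this.symm
  rcases le_or_gt m (-1) with hm | hm
  · induction m, hm using Int.leInductionDown with
    | base => exact hm1
    | pred k hk ih =>
      have hk0 : (k : K) ≠ 0 := by exact_mod_cast (by omega : k ≠ 0)
      have := hf (k - 1)
      rw [sub_add_cancel, ih, mul_zero] at this
      push_cast at this
      simpa [hk0] using this
  obtain rfl | rfl | hm2 := show m = 0 ∨ m = 1 ∨ 2 ≤ m by omega
  · exact h0
  · exact h1
  clear hm
  induction m, hm2 using Int.leInduction with
  | base => exact h2
  | succ k hk ih =>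
    have hk1 : (k : K) - 1 ≠ 0 := sub_ne_zero.mpr (by exact_mod_cast (by omega : k ≠ 1))
    have := hf k
    rw [ih, mul_zero] at this
    simpa [hk1] using this.symm

theorem stmt0_general (g : ℤ → ℂ)
    (h : ∀ m n : ℤ, ((m : ℂ) + n) * g m = ((m : ℂ) - n) * g (m + n) + ((m : ℂ) + n) * g n)
    (hm1 : g (-1) = 0) :
    ∀ m : ℤ, g m = (1/2 : ℂ) * ((m : ℂ)^2 + m) * g 1 := by
  set f : ℤ → ℂ := fun m => g m - (1/2 : ℂ) * ((m : ℂ)^2 + m) * g 1 with hf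
  have hrec : ∀ m : ℤ, ((m : ℂ) + 1) * f m = ((m : ℂ) - 1) * f (m + 1) := fun m => by
    have := h m 1
    simp only [hf]
    push_cast at this ⊢
    linear_combination this
  have h2 : f 2 = 0 := by
    have e1 := h 2 1
    have e2 := h (-1) 3
    simp only [hf]
    push_cast at e1 e2 ⊢
    linear_combination e1 - (1/2 : ℂ) * e2 + hm1
  intro m
  linear_combination eq_zero_of_mul_eq_mul_succ f hrec h2 (by simp [hf, hm1]) m

theorem stmt0 (g : ℤ → ℂ)
    (h : ∀ m n : ℤ, ((m : ℂ) + n) * g m = ((m : ℂ) - n) * g (m + n) + ((m : ℂ) + n) * g n)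
    (h0 : g 0 = 0) (hm1 : g (-1) = 0) :
    ∀ m : ℤ, g m = (1/2 : ℂ) * ((m : ℂ)^2 + m) * g 1 :=
  stmt0_general g h hm1
end

section
/- The bracket on the free ℂ-module with basis {L_m, W_m, G_r, C₁, C₂ : m ∈ ℤ, r ∈ ℤ+1/2} defined by [L_m,L_n] = (n−m)L_{m+n} + ((m³−m)/12)δ_{m+n,0}C₁, [L_m,W_n] = (m+n)W_{m+n} + δ_{m+n,0}C₂, [L_m,G_r] = r·G_{m+r}, [G_r,G_s] = (r+s)W_{r+s} + δ_{r+s,0}C₂, [W_m,W_n] = [W_m,G_r] = [·,C₁] = [·,C₂] = 0, with L_m, W_m, C₁, C₂ even and G_r odd, satisfies the super Jacobi identity, making it a Lie superalgebra. -/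
/-- Basis of the super extended Ovsienko–Roger algebra 𝒮.
`G n` represents the odd generator `G_{n+1/2}` (so the index runs over ℤ+1/2). -/
inductive SB : Type
  | L : ℤ → SB
  | W : ℤ → SB
  | G : ℤ → SB
  | C1 : SB
  | C2 : SB
  deriving DecidableEq

/-- Parity: `L, W, C1, C2` are even, `G` is odd. -/
def parity : SB → ℕ
  | SB.G _ => 1
  | _ => 0

open SB in
/-- The bracket of 𝒮 on basis elements, with values in the free ℂ-module on the basis. -/
noncomputable def br : SB → SB → (SB →₀ ℂ)
  | L m, L n =>
      Finsupp.single (L (m + n)) ((n : ℂ) - m)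
        + Finsupp.single C1 ((((m : ℂ) ^ 3 - m) / 12) * (if m + n = 0 then 1 else 0))
  | L m, W n =>
      Finsupp.single (W (m + n)) ((m : ℂ) + n)
        + Finsupp.single C2 (if m + n = 0 then 1 else 0)
  | W n, L m =>
      -(Finsupp.single (W (m + n)) ((m : ℂ) + n)
        + Finsupp.single C2 (if m + n = 0 then 1 else 0))
  | L m, G n => Finsupp.single (G (m + n)) ((n : ℂ) + 1/2)
  | G n, L m => -(Finsupp.single (G (m + n)) ((n : ℂ) + 1/2))
  | G m, G n =>
      Finsupp.single (W (m + n + 1)) ((m : ℂ) + n + 1)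
        + Finsupp.single C2 (if m + n + 1 = 0 then 1 else 0)
  | _, _ => 0

/-- Bilinear extension of the bracket in the second argument. -/
noncomputable def brL (x : SB) (v : SB →₀ ℂ) : SB →₀ ℂ := v.sum fun b c => c • br x b

/-- Bilinear extension of the bracket in the first argument. -/
noncomputable def brR (v : SB →₀ ℂ) (z : SB) : SB →₀ ℂ := v.sum fun b c => c • br b z


lemma brL_single (x b : SB) (c : ℂ) : brL x (Finsupp.single b c) = c • br x b := by
  unfold brL; exact Finsupp.sum_single_index (by simp)

lemma brR_single (b z : SB) (c : ℂ) : brR (Finsupp.single b c) z = c • br b z := by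
  unfold brR; exact Finsupp.sum_single_index (by simp)

lemma brL_add (x : SB) (u v : SB →₀ ℂ) : brL x (u + v) = brL x u + brL x v := by
  unfold brL; exact Finsupp.sum_add_index (by simp) (by intros; rw [add_smul])

lemma brR_add (u v : SB →₀ ℂ) (z : SB) : brR (u + v) z = brR u z + brR v z := by
  unfold brR; exact Finsupp.sum_add_index (by simp) (by intros; rw [add_smul])

lemma brL_zero (x : SB) : brL x 0 = 0 := Finsupp.sum_zero_index

lemma brR_zero (z : SB) : brR 0 z = 0 := Finsupp.sum_zero_index

lemma brL_neg (x : SB) (v : SB →₀ ℂ) : brL x (-v) = -brL x v := by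
  have h := brL_add x v (-v); simp [brL_zero] at h
  exact eq_neg_of_add_eq_zero_left (by rw [add_comm]; exact h.symm)

lemma brR_neg (v : SB →₀ ℂ) (z : SB) : brR (-v) z = -brR v z := by
  have h := brR_add v (-v) z; simp [brR_zero] at h
  exact eq_neg_of_add_eq_zero_left (by rw [add_comm]; exact h.symm)

set_option maxHeartbeats 1600000 in
/-- The bracket of 𝒮 satisfies super skew-symmetry and the super Jacobi identity,
making 𝒮 a Lie superalgebra. -/
theorem stmt3 :
    (∀ x y : SB, br x y = -((-1 : ℂ) ^ (parity x * parity y) • br y x)) ∧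
    (∀ x y z : SB,
      brL x (br y z) = brR (br x y) z + (-1 : ℂ) ^ (parity x * parity y) • brL y (br x z)) := by
  constructor
  · intro x y
    rcases x with m | m | m | _ | _ <;> rcases y with n | n | n | _ | _
    all_goals simp only [br, parity, Nat.mul_zero, Nat.zero_mul, Nat.mul_one, pow_zero, pow_one,
        one_smul, neg_smul, neg_neg, neg_zero, smul_zero, smul_add, smul_neg,
        Finsupp.smul_single, smul_eq_mul, neg_one_mul]
    all_goals try rfl
    all_goals ext a
    all_goals rcases a with p | p | p | _ | _
    all_goals simp [Finsupp.single_apply]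
    all_goals try split_ifs
    all_goals try push_cast
    all_goals first
        | rfl
        | ring1
        | (exfalso; omega)
        | (have hc : (n:ℂ) = -(m:ℂ) := by exact_mod_cast (show n = -m by omega)
           rw [hc]; ring1)
        | (have hc : (n:ℂ) = -(m:ℂ) - 1 := by exact_mod_cast (show n = -m - 1 by omega)
           rw [hc]; ring1)
  · intro x y z
    rcases x with m | m | m | _ | _ <;> rcases y with n | n | n | _ | _ <;>
      rcases z with k | k | k | _ | _
    all_goals simp only [br, parity, Nat.mul_zero, Nat.zero_mul, Nat.mul_one, pow_zero, pow_one,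
        brL_add, brL_single, brL_neg, brL_zero, brR_add, brR_single, brR_neg, brR_zero,
        one_smul, neg_smul, neg_neg, neg_zero, smul_zero, smul_add, smul_neg,
        Finsupp.smul_single, smul_eq_mul, neg_one_mul, add_zero, zero_add]
    all_goals try rfl
    all_goals ext a
    all_goals rcases a with p | p | p | _ | _
    all_goals simp [Finsupp.single_apply]
    all_goals try split_ifs
    all_goals try push_cast
    all_goals first
        | rfl
        | ring1
        | (exfalso; omega)
        | (have hc : (k:ℂ) = -(m:ℂ) - n := by exact_mod_cast (show k = -m - n by omega)
           rw [hc]; ring1)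
        | (have hc : (k:ℂ) = -(m:ℂ) - n - 1 := by exact_mod_cast (show k = -m - n - 1 by omega)
           rw [hc]; ring1)
        | (have hc : (n:ℂ) = -(m:ℂ) := by exact_mod_cast (show n = -m by omega)
           rw [hc]; ring1)
        | (have hc : (n:ℂ) = -(m:ℂ) - 1 := by exact_mod_cast (show n = -m - 1 by omega)
           rw [hc]; ring1)
end

section
/- Let V be a simple module over 𝒯_d such that W_i V = 0 for all i > t (t ∈ ℕ). Then G_{i−1/2}V = 0 for all i > t. -/
/-!
For `b > t` and `a ≥ 1` the anticommutator of `G_a` and `G_b` is a multiple of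
`W_{a+b-1} = 0`, so the high `G_b` anticommute with every `G_a` and square to zero: a product
of high `G`'s with a repeated factor vanishes. Let `V(k, s)` (`highGSpan`) be the span of the
vectors `G_{l₁} ⋯ G_{l_k} z` with all `lᵢ > t` and `∑ lᵢ ≤ s`. Moving generators past such a
product shows that `L_m` maps `V(k, s)` into `V(k, s + m)` and that `W_n`, `G_j`, `C₁`, `C₂`
preserve it.

Fix `v`. The vectors `w` admitting an `R` with `v ∈ V(k, s) → w ∈ V(k + 1, s + R)` for all
`k, s` form a submodule containing `G_i v`. If `G_i v ≠ 0`, simplicity makes it all of `V`, so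
`v` itself has such an `R`, and `v ∈ V(k, kR)` for every `k`. But `k` distinct indices `> t`
sum to at least `kt + k(k+1)/2`, so `V(k, kR) = 0` for large `k`, and `v = 0`.
-/

namespace List

variable {R ι : Type*} [Ring R] {g : ι → R} {p : ι → Prop}

theorem mul_prod_map_eq_zero_of_mem
    (hanti : ∀ a b, p a → p b → g a * g b = -(g b * g a))
    (hsq : ∀ a, p a → g a * g a = 0) {a : ι} {l : List ι} (hl : ∀ b ∈ l, p b) (ha : a ∈ l) :
    g a * (l.map g).prod = 0 := by
  induction l with
  | nil => simp at ha
  | cons b l ih =>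
    obtain ⟨hb, hl⟩ := forall_mem_cons.mp hl
    rw [map_cons, prod_cons, ← mul_assoc]
    rcases mem_cons.mp ha with rfl | ha
    · rw [hsq a hb, zero_mul]
    · rw [hanti a b (hl a ha) hb, neg_mul, mul_assoc, ih hl ha, mul_zero, neg_zero]

theorem prod_map_eq_zero_of_not_nodup
    (hanti : ∀ a b, p a → p b → g a * g b = -(g b * g a))
    (hsq : ∀ a, p a → g a * g a = 0) {l : List ι} (hl : ∀ b ∈ l, p b) (hnd : ¬ l.Nodup) :
    (l.map g).prod = 0 := by
  induction l with
  | nil => exact absurd nodup_nil hnd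
  | cons a l ih =>
    have hl' : ∀ c ∈ l, p c := (forall_mem_cons.mp hl).2
    rw [map_cons, prod_cons]
    by_cases ha : a ∈ l
    · exact mul_prod_map_eq_zero_of_mem hanti hsq hl' ha
    · rw [ih hl' fun h => hnd (nodup_cons.mpr ⟨ha, h⟩), mul_zero]

theorem mul_prod_map_eq_pow_smul {K B : Type*} [CommSemiring K] [Semiring B] [Algebra K B]
    {f : ι → B} {x : B} {c : K} (hx : ∀ b, p b → x * f b = c • (f b * x))
    {l : List ι} (hl : ∀ b ∈ l, p b) :
    x * (l.map f).prod = c ^ l.length • ((l.map f).prod * x) := by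
  induction l with
  | nil => simp
  | cons b l ih =>
    obtain ⟨hb, hl⟩ := forall_mem_cons.mp hl
    simp only [map_cons, prod_cons, length_cons]
    rw [← mul_assoc, hx b hb, smul_mul_assoc, mul_assoc, ih hl, mul_smul_comm, smul_smul,
      pow_succ', mul_assoc]

end List

theorem Finset.card_mul_le_two_mul_sum {s : Finset ℤ} {c : ℤ} (hs : ∀ x ∈ s, c ≤ x) :
    (s.card : ℤ) * (2 * c + s.card - 1) ≤ 2 * ∑ x ∈ s, x := by
  induction s using Finset.induction_on_min generalizing c with
  | empty => simp
  | insert a s hmin ih =>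
    have has : a ∉ s := fun h => (hmin a h).false
    have hca : c ≤ a := hs a (mem_insert_self a s)
    have := ih fun x hx => (show c + 1 ≤ x by linarith [hmin x hx])
    rw [card_insert_of_notMem has, sum_insert has]
    push_cast
    nlinarith

section HighGSpan

open Submodule

variable {V : Type*} [AddCommGroup V] [Module ℂ V]
variable (EG : ℤ → Module.End ℂ V) (t : ℕ)

def highGSpan (k : ℕ) (s : ℤ) : Submodule ℂ V :=
  span ℂ {w | ∃ (l : List ℤ) (z : V),
    (∀ b ∈ l, (t : ℤ) < b) ∧ l.length = k ∧ l.sum ≤ s ∧ w = (l.map EG).prod z}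

variable {EG t}

theorem prod_apply_mem_highGSpan {l : List ℤ} (hl : ∀ b ∈ l, (t : ℤ) < b) {s : ℤ}
    (hs : l.sum ≤ s) (z : V) : (l.map EG).prod z ∈ highGSpan EG t l.length s :=
  subset_span ⟨l, z, hl, rfl, hs, rfl⟩

theorem highGSpan_mono {k : ℕ} {s s' : ℤ} (h : s ≤ s') :
    highGSpan EG t k s ≤ highGSpan EG t k s' :=
  span_mono fun _ ⟨l, z, hl, hk, hs, hw⟩ => ⟨l, z, hl, hk, hs.trans h, hw⟩

theorem apply_mem_highGSpan_of_forall {A : Module.End ℂ V} {k k' : ℕ} {s s' : ℤ}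
    (hA : ∀ l : List ℤ, (∀ b ∈ l, (t : ℤ) < b) → l.length = k → l.sum ≤ s → ∀ z,
      A ((l.map EG).prod z) ∈ highGSpan EG t k' s')
    {w : V} (hw : w ∈ highGSpan EG t k s) : A w ∈ highGSpan EG t k' s' := by
  refine (map_span_le A _ _).mpr ?_ (mem_map_of_mem hw)
  rintro _ ⟨l, z, hl, hk, hs, rfl⟩
  exact hA l hl hk hs z

theorem EG_apply_mem_highGSpan_succ {j : ℤ} (hj : (t : ℤ) < j) {k : ℕ} {s : ℤ} {w : V}
    (hw : w ∈ highGSpan EG t k s) : EG j w ∈ highGSpan EG t (k + 1) (s + j) := by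
  refine apply_mem_highGSpan_of_forall (fun l hl hk hs z => ?_) hw
  have := prod_apply_mem_highGSpan (EG := EG) (List.forall_mem_cons.mpr ⟨hj, hl⟩) (s := s + j)
    (by simp only [List.sum_cons]; linarith) z
  simpa [← hk] using this

theorem apply_mem_highGSpan_of_semiconj {A : Module.End ℂ V} (c : ℂ)
    (hA : ∀ b : ℤ, (t : ℤ) < b → A * EG b = c • (EG b * A)) {k : ℕ} {s : ℤ} {w : V}
    (hw : w ∈ highGSpan EG t k s) : A w ∈ highGSpan EG t k s := by
  refine apply_mem_highGSpan_of_forall (fun l hl hk hs z => ?_) hw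
  rw [← Module.End.mul_apply, List.mul_prod_map_eq_pow_smul hA hl, LinearMap.smul_apply,
    ← hk]
  exact smul_mem _ _ (prod_apply_mem_highGSpan hl hs _)

theorem apply_prod_mem_highGSpan_of_commutator {A : Module.End ℂ V} {m : ℤ} (hm : 0 ≤ m)
    (hA : ∀ n : ℤ, (t : ℤ) < n → ∃ c : ℂ, A * EG n - EG n * A = c • EG (m + n))
    {l : List ℤ} (hl : ∀ b ∈ l, (t : ℤ) < b) (z : V) :
    A ((l.map EG).prod z) ∈ highGSpan EG t l.length (l.sum + m) := by
  induction l with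
  | nil => exact prod_apply_mem_highGSpan hl (by simpa using hm) (A z)
  | cons j l ih =>
    obtain ⟨hj, hl⟩ := List.forall_mem_cons.mp hl
    obtain ⟨c, hc⟩ := hA j hj
    have hexpand : A * (((j :: l).map EG).prod)
        = EG j * (A * (l.map EG).prod) + c • (((m + j) :: l).map EG).prod := by
      simp only [List.map_cons, List.prod_cons]
      rw [← mul_assoc, sub_eq_iff_eq_add'.mp hc, add_mul, smul_mul_assoc, mul_assoc]
    have hraised : (((m + j) :: l).map EG).prod z
        ∈ highGSpan EG t (j :: l).length ((j :: l).sum + m) := by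
      have hml : ∀ b ∈ (m + j) :: l, (t : ℤ) < b :=
        List.forall_mem_cons.mpr ⟨by linarith, hl⟩
      exact prod_apply_mem_highGSpan hml (by simp only [List.sum_cons]; linarith) z
    have hcommuted : EG j (A ((l.map EG).prod z))
        ∈ highGSpan EG t (j :: l).length ((j :: l).sum + m) :=
      highGSpan_mono (by simp only [List.sum_cons]; linarith)
        (EG_apply_mem_highGSpan_succ hj (ih hl))
    rw [← Module.End.mul_apply, hexpand, LinearMap.add_apply, LinearMap.smul_apply]
    exact add_mem hcommuted (smul_mem _ _ hraised)

theorem apply_mem_highGSpan_of_commutator {A : Module.End ℂ V} {m : ℤ} (hm : 0 ≤ m)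
    (hA : ∀ n : ℤ, (t : ℤ) < n → ∃ c : ℂ, A * EG n - EG n * A = c • EG (m + n))
    {k : ℕ} {s : ℤ} {w : V} (hw : w ∈ highGSpan EG t k s) :
    A w ∈ highGSpan EG t k (s + m) :=
  apply_mem_highGSpan_of_forall (fun l hl hk hs z => hk ▸
    highGSpan_mono (by linarith) (apply_prod_mem_highGSpan_of_commutator hm hA hl z)) hw

theorem highGSpan_eq_bot
    (hanti : ∀ a b : ℤ, (t : ℤ) < a → (t : ℤ) < b → EG a * EG b = -(EG b * EG a))
    {k : ℕ} {s : ℤ} (hks : 2 * s < k * (2 * t + k + 1)) : highGSpan EG t k s = ⊥ := by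
  have hsq : ∀ a : ℤ, (t : ℤ) < a → EG a * EG a = 0 := fun a ha => by
    have h2 : (2 : ℂ) • (EG a * EG a) = 0 := by
      rw [two_smul]; nth_rewrite 1 [hanti a a ha ha]; exact neg_add_cancel _
    exact (smul_eq_zero.mp h2).resolve_left two_ne_zero
  refine span_eq_bot.mpr ?_
  rintro _ ⟨l, z, hl, rfl, hs, rfl⟩
  by_cases hnd : l.Nodup
  · have hbound := Finset.card_mul_le_two_mul_sum (s := l.toFinset) (c := t + 1)
      fun x hx => hl x (List.mem_toFinset.mp hx)
    rw [List.toFinset_card_of_nodup hnd, List.sum_toFinset _ hnd, List.map_id'] at hbound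
    linarith
  · rw [List.prod_map_eq_zero_of_not_nodup hanti hsq hl hnd, LinearMap.zero_apply]

variable (EG t) in
def gShiftSubmodule (v : V) : Submodule ℂ V where
  carrier := {w | ∃ R : ℤ, ∀ (k : ℕ) (s : ℤ),
    v ∈ highGSpan EG t k s → w ∈ highGSpan EG t (k + 1) (s + R)}
  zero_mem' := ⟨0, fun _ _ _ => zero_mem _⟩
  add_mem' := by
    rintro w₁ w₂ ⟨R₁, h₁⟩ ⟨R₂, h₂⟩
    refine ⟨max R₁ R₂, fun k s hv => add_mem ?_ ?_⟩
    · exact highGSpan_mono (by linarith [le_max_left R₁ R₂]) (h₁ k s hv)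
    · exact highGSpan_mono (by linarith [le_max_right R₁ R₂]) (h₂ k s hv)
  smul_mem' := by
    rintro c w ⟨R, h⟩
    exact ⟨R, fun k s hv => smul_mem _ c (h k s hv)⟩

theorem apply_mem_gShiftSubmodule {A : Module.End ℂ V} (m : ℤ)
    (hA : ∀ (k : ℕ) (s : ℤ), ∀ w ∈ highGSpan EG t k s, A w ∈ highGSpan EG t k (s + m))
    {v w : V} (hw : w ∈ gShiftSubmodule EG t v) : A w ∈ gShiftSubmodule EG t v := by
  obtain ⟨R, h⟩ := hw
  exact ⟨R + m, fun k s hv => by simpa only [add_assoc] using hA _ _ _ (h k s hv)⟩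

theorem apply_mem_gShiftSubmodule_of_semiconj {A : Module.End ℂ V} (c : ℂ)
    (hA : ∀ b : ℤ, (t : ℤ) < b → A * EG b = c • (EG b * A))
    {v w : V} (hw : w ∈ gShiftSubmodule EG t v) : A w ∈ gShiftSubmodule EG t v :=
  apply_mem_gShiftSubmodule 0
    (fun _ _ _ hw => by simpa using apply_mem_highGSpan_of_semiconj c hA hw) hw

theorem EG_apply_mem_gShiftSubmodule {i : ℤ} (hi : (t : ℤ) < i) (v : V) :
    EG i v ∈ gShiftSubmodule EG t v :=
  ⟨i, fun _ _ hv => EG_apply_mem_highGSpan_succ hi hv⟩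

theorem eq_zero_of_mem_gShiftSubmodule
    (hanti : ∀ a b : ℤ, (t : ℤ) < a → (t : ℤ) < b → EG a * EG b = -(EG b * EG a))
    {v : V} (hv : v ∈ gShiftSubmodule EG t v) : v = 0 := by
  obtain ⟨R, hR⟩ := hv
  have hiter : ∀ k : ℕ, v ∈ highGSpan EG t k (k * R) := by
    intro k
    induction k with
    | zero =>
      simpa using prod_apply_mem_highGSpan (EG := EG) (t := t) (l := []) (by simp) le_rfl v
    | succ k ih => simpa [add_mul] using hR k _ ih
  set k := (2 * R).toNat + 1
  have hks : 2 * (k * R) < k * (2 * t + k + 1) := by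
    rw [mul_left_comm]
    exact mul_lt_mul_of_pos_left (by omega) (by omega)
  simpa [highGSpan_eq_bot hanti hks] using hiter k

end HighGSpan

theorem stmt14_general
    (V : Type*) [AddCommGroup V] [Module ℂ V] (d t : ℕ)
    (EL EW EG : ℤ → Module.End ℂ V) (EC1 EC2 : Module.End ℂ V)
    (hLG : ∀ m n : ℤ, 0 ≤ m → 1 ≤ n → EL m * EG n - EG n * EL m
      = ((n : ℂ) - 1/2) • EG (m + n))
    (hGG : ∀ m n : ℤ, 1 ≤ m → 1 ≤ n → EG m * EG n + EG n * EG m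
      = ((m : ℂ) + n - 1) • EW (m + n - 1)
        + (if m + n - 1 = 0 then (1 : ℂ) else 0) • EC2)
    (hWG : ∀ m n : ℤ, -(d : ℤ) ≤ m → 1 ≤ n → EW m * EG n = EG n * EW m)
    (hcent : ∀ m : ℤ, Commute EC1 (EL m) ∧ Commute EC1 (EW m) ∧ Commute EC1 (EG m)
      ∧ Commute EC2 (EL m) ∧ Commute EC2 (EW m) ∧ Commute EC2 (EG m)
      ∧ Commute EC1 EC2)
    (hWt : ∀ i : ℤ, (t : ℤ) < i → ∀ v : V, EW i v = 0)
    (hsimple : ∀ U : Submodule ℂ V,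
      ((∀ m : ℤ, 0 ≤ m → ∀ u ∈ U, EL m u ∈ U) ∧
       (∀ n : ℤ, -(d : ℤ) ≤ n → ∀ u ∈ U, EW n u ∈ U) ∧
       (∀ j : ℤ, 1 ≤ j → ∀ u ∈ U, EG j u ∈ U) ∧
       (∀ u ∈ U, EC1 u ∈ U) ∧ (∀ u ∈ U, EC2 u ∈ U)) → U = ⊥ ∨ U = ⊤) :
    ∀ i : ℤ, (t : ℤ) < i → ∀ v : V, EG i v = 0 := by
  intro i hi v
  have hEW : ∀ n : ℤ, (t : ℤ) < n → EW n = 0 := fun n hn => LinearMap.ext (hWt n hn)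
  have hanti : ∀ a b : ℤ, 1 ≤ a → (t : ℤ) < b → EG a * EG b = -(EG b * EG a) := by
    intro a b ha hb
    have h := hGG a b ha (by omega)
    rw [hEW _ (by omega), if_neg (by omega), smul_zero, zero_smul, add_zero] at h
    exact eq_neg_of_add_eq_zero_left h
  have hinvariant :
      ∀ m : ℤ, 0 ≤ m → ∀ w ∈ gShiftSubmodule EG t v, EL m w ∈ gShiftSubmodule EG t v :=
    fun m hm w hw => apply_mem_gShiftSubmodule m
      (fun _ _ _ hw' => apply_mem_highGSpan_of_commutator hm
        (fun n hn => ⟨n - 1 / 2, hLG m n hm (by omega)⟩) hw') hw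
  by_contra hu
  have htop : gShiftSubmodule EG t v = ⊤ := by
    refine (hsimple _ ⟨hinvariant, ?_, ?_, ?_, ?_⟩).resolve_left fun hbot => hu ?_
    · exact fun n hn w => apply_mem_gShiftSubmodule_of_semiconj 1
        fun b hb => by rw [one_smul, hWG n b hn (by omega)]
    · exact fun j hj w => apply_mem_gShiftSubmodule_of_semiconj (-1)
        fun b hb => by rw [neg_one_smul, hanti j b hj hb]
    · exact fun w => apply_mem_gShiftSubmodule_of_semiconj 1
        fun b _ => by rw [one_smul, ((hcent b).2.2.1).eq]
    · exact fun w => apply_mem_gShiftSubmodule_of_semiconj 1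
        fun b _ => by rw [one_smul, ((hcent b).2.2.2.2.2.1).eq]
    · simpa [hbot] using EG_apply_mem_gShiftSubmodule (EG := EG) hi v
  have hv : v = 0 := eq_zero_of_mem_gShiftSubmodule
    (fun a b ha hb => hanti a b (by omega) hb) (htop ▸ Submodule.mem_top)
  exact hu (by rw [hv, map_zero])

/-- Let `V` be a simple module over the subalgebra `𝒯_d` of `𝒮` (operators as in the
bracket relations below; `EG n` acts as `G_{n-1/2}`), with `W_i V = 0` for all `i > t`.
Then `G_{i-1/2} V = 0` for all `i > t`. -/
theorem stmt14
    (V : Type*) [AddCommGroup V] [Module ℂ V] (d t : ℕ)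
    (EL EW EG : ℤ → Module.End ℂ V) (EC1 EC2 : Module.End ℂ V)
    (hLL : ∀ m n : ℤ, 0 ≤ m → 0 ≤ n → EL m * EL n - EL n * EL m
      = ((n : ℂ) - m) • EL (m + n)
        + ((((m : ℂ) ^ 3 - m) / 12) * (if m + n = 0 then 1 else 0)) • EC1)
    (hLW : ∀ m n : ℤ, 0 ≤ m → -(d : ℤ) ≤ n → EL m * EW n - EW n * EL m
      = ((m : ℂ) + n) • EW (m + n) + (if m + n = 0 then (1 : ℂ) else 0) • EC2)
    (hLG : ∀ m n : ℤ, 0 ≤ m → 1 ≤ n → EL m * EG n - EG n * EL m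
      = ((n : ℂ) - 1/2) • EG (m + n))
    (hGG : ∀ m n : ℤ, 1 ≤ m → 1 ≤ n → EG m * EG n + EG n * EG m
      = ((m : ℂ) + n - 1) • EW (m + n - 1)
        + (if m + n - 1 = 0 then (1 : ℂ) else 0) • EC2)
    (hWW : ∀ m n : ℤ, -(d : ℤ) ≤ m → -(d : ℤ) ≤ n → EW m * EW n = EW n * EW m)
    (hWG : ∀ m n : ℤ, -(d : ℤ) ≤ m → 1 ≤ n → EW m * EG n = EG n * EW m)
    (hcent : ∀ m : ℤ, Commute EC1 (EL m) ∧ Commute EC1 (EW m) ∧ Commute EC1 (EG m)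
      ∧ Commute EC2 (EL m) ∧ Commute EC2 (EW m) ∧ Commute EC2 (EG m)
      ∧ Commute EC1 EC2)
    (hWt : ∀ i : ℤ, (t : ℤ) < i → ∀ v : V, EW i v = 0)
    (hnt : Nontrivial V)
    (hsimple : ∀ U : Submodule ℂ V,
      ((∀ m : ℤ, 0 ≤ m → ∀ u ∈ U, EL m u ∈ U) ∧
       (∀ n : ℤ, -(d : ℤ) ≤ n → ∀ u ∈ U, EW n u ∈ U) ∧
       (∀ j : ℤ, 1 ≤ j → ∀ u ∈ U, EG j u ∈ U) ∧
       (∀ u ∈ U, EC1 u ∈ U) ∧ (∀ u ∈ U, EC2 u ∈ U)) → U = ⊥ ∨ U = ⊤) :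
    ∀ i : ℤ, (t : ℤ) < i → ∀ v : V, EG i v = 0 :=
  stmt14_general V d t EL EW EG EC1 EC2 hLG hGG hWG hcent hWt hsimple
end

section
/- Let P be a module over 𝒮 and v ∈ P with L_t v = λv for some λ ∈ ℂ, t ∈ ℕ. Then for all j > t and m ∈ ℕ: (j+(m−1)t)·L_{j+(m+1)t}v = (L_t − λ)L_{j+mt}v, (j+(m+1)t)·W_{j+(m+1)t}v = (L_t − λ)W_{j+mt}v, and (j+mt−1/2)·G_{j+(m+1)t−1/2}v = (L_t − λ)G_{j+mt−1/2}v. -/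
/-- Let `P` be an 𝒮-module (here `EG n` acts as `G_{n-1/2}`) and `v ∈ P` with
`L_t v = λv` for some `t ∈ ℕ`.  Then for all `j > t` and `m ∈ ℕ`:
`(j+(m−1)t)·L_{j+(m+1)t}v = (L_t − λ)L_{j+mt}v`,
`(j+(m+1)t)·W_{j+(m+1)t}v = (L_t − λ)W_{j+mt}v`, and
`(j+mt−1/2)·G_{j+(m+1)t−1/2}v = (L_t − λ)G_{j+mt−1/2}v`. -/
theorem stmt16 (M : Type*) [AddCommGroup M] [Module ℂ M]
    (EL EW EG : ℤ → Module.End ℂ M) (EC1 EC2 : Module.End ℂ M)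
    (hLL : ∀ m n : ℤ, EL m * EL n - EL n * EL m
      = ((n : ℂ) - m) • EL (m + n)
        + ((((m : ℂ) ^ 3 - m) / 12) * (if m + n = 0 then 1 else 0)) • EC1)
    (hLW : ∀ m n : ℤ, EL m * EW n - EW n * EL m
      = ((m : ℂ) + n) • EW (m + n) + (if m + n = 0 then (1 : ℂ) else 0) • EC2)
    (hLG : ∀ m n : ℤ, EL m * EG n - EG n * EL m = ((n : ℂ) - 1/2) • EG (m + n))
    (hGG : ∀ m n : ℤ, EG m * EG n + EG n * EG m
      = ((m : ℂ) + n - 1) • EW (m + n - 1)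
        + (if m + n - 1 = 0 then (1 : ℂ) else 0) • EC2)
    (hWW : ∀ m n : ℤ, EW m * EW n = EW n * EW m)
    (hWG : ∀ m n : ℤ, EW m * EG n = EG n * EW m)
    (hcent : ∀ m : ℤ, Commute EC1 (EL m) ∧ Commute EC1 (EW m) ∧ Commute EC1 (EG m)
      ∧ Commute EC2 (EL m) ∧ Commute EC2 (EW m) ∧ Commute EC2 (EG m)
      ∧ Commute EC1 EC2)
    (t : ℕ) (lam : ℂ) (v : M) (hv : EL t v = lam • v) :
    ∀ j : ℤ, (t : ℤ) < j → ∀ m : ℕ,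
      ((j : ℂ) + ((m : ℂ) - 1) * t) • EL (j + (m + 1) * t) v
          = EL t (EL (j + (m : ℤ) * t) v) - lam • EL (j + (m : ℤ) * t) v ∧
      ((j : ℂ) + ((m : ℂ) + 1) * t) • EW (j + (m + 1) * t) v
          = EL t (EW (j + (m : ℤ) * t) v) - lam • EW (j + (m : ℤ) * t) v ∧
      ((j : ℂ) + (m : ℂ) * t - 1/2) • EG (j + (m + 1) * t) v
          = EL t (EG (j + (m : ℤ) * t) v) - lam • EG (j + (m : ℤ) * t) v := by
  intro j hj m
  have ht0 : (0:ℤ) ≤ (t:ℤ) := Int.natCast_nonneg t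
  have hj0 : (0:ℤ) < j := lt_of_le_of_lt ht0 hj
  have hmt : (0:ℤ) ≤ (m:ℤ) * t := mul_nonneg (Int.natCast_nonneg m) ht0
  have hne : (t:ℤ) + (j + (m:ℤ) * t) ≠ 0 := ne_of_gt (by linarith)
  have he : (t:ℤ) + (j + (m:ℤ)*t) = j + ((m:ℤ)+1)*t := by ring
  refine ⟨?_, ?_, ?_⟩
  · have h := congrArg (fun f : Module.End ℂ M => f v) (hLL t (j + (m:ℤ)*t))
    simp only [if_neg hne, mul_zero, zero_smul, add_zero, LinearMap.sub_apply,
      Module.End.mul_apply, LinearMap.smul_apply] at h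
    rw [hv, map_smul, he] at h
    rw [h]
    congr 1
    push_cast
    ring
  · have h := congrArg (fun f : Module.End ℂ M => f v) (hLW t (j + (m:ℤ)*t))
    simp only [if_neg hne, zero_smul, add_zero, LinearMap.sub_apply,
      Module.End.mul_apply, LinearMap.smul_apply] at h
    rw [hv, map_smul, he] at h
    rw [h]
    congr 1
    push_cast
    ring
  · have h := congrArg (fun f : Module.End ℂ M => f v) (hLG t (j + (m:ℤ)*t))
    simp only [LinearMap.sub_apply, Module.End.mul_apply, LinearMap.smul_apply] at h
    rw [hv, map_smul, he] at h
    rw [h]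
    congr 1
    push_cast
    ring
end
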